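/- arXiv:2403.16874 — 4 statements merged into one kernel-verified Lean document; each statement's English description precedes it below -/
import Mathlib

section
/- Let C be a finite set of unit vectors in ℝ^n with |C| = N ≥ 2, let α < β be real numbers such that every inner product between distinct points of C equals α or β, and suppose every point of C has exactly k inner products equal to α with other points of C. If α < -β < 0 < β, then the two inequalities k·α + (N-k-1)·β + 1 ≥ 0 and k·(α² - 1/n) + (N-k-1)·(β² - 1/n) + (1 - 1/n) ≥ 0 determine k uniquely when both hold with equality: namely there is at most one real k satisfying both with equality, and any k satisfying both inequalities must equal that value. -/
open scoped RealInnerProductSpace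

/-- For a two-distance set of `N ≥ 2` unit vectors in `ℝ^n` with inner products
`α < β` between distinct points, where `α < -β < 0 < β`, the two spherical 2-design
inequalities determine `k` uniquely when both hold with equality: there is at most one
real `k` satisfying both with equality, and any `k` satisfying both inequalities must
equal that value. -/
theorem stmt2 {n : ℕ} (hn : 0 < n) (C : Finset (EuclideanSpace ℝ (Fin n)))
    (N : ℕ) (α β : ℝ)
    (hN : N = C.card) (hN2 : 2 ≤ N)
    (hunit : ∀ x ∈ C, ‖x‖ = 1)
    (htwo : ∀ x ∈ C, ∀ y ∈ C, x ≠ y → ⟪x, y⟫ = α ∨ ⟪x, y⟫ = β)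
    (hαβ : α < β) (h1 : α < -β) (h2 : -β < 0) (h3 : (0 : ℝ) < β) :
    (∀ k₀ k₁ : ℝ,
      (k₀ * α + ((N : ℝ) - k₀ - 1) * β + 1 = 0 ∧
        k₀ * (α ^ 2 - 1 / n) + ((N : ℝ) - k₀ - 1) * (β ^ 2 - 1 / n) + (1 - 1 / n) = 0) →
      (k₁ * α + ((N : ℝ) - k₁ - 1) * β + 1 = 0 ∧
        k₁ * (α ^ 2 - 1 / n) + ((N : ℝ) - k₁ - 1) * (β ^ 2 - 1 / n) + (1 - 1 / n) = 0) →
      k₀ = k₁) ∧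
    (∀ k₀ k : ℝ,
      (k₀ * α + ((N : ℝ) - k₀ - 1) * β + 1 = 0 ∧
        k₀ * (α ^ 2 - 1 / n) + ((N : ℝ) - k₀ - 1) * (β ^ 2 - 1 / n) + (1 - 1 / n) = 0) →
      (0 ≤ k * α + ((N : ℝ) - k - 1) * β + 1 ∧
        0 ≤ k * (α ^ 2 - 1 / n) + ((N : ℝ) - k - 1) * (β ^ 2 - 1 / n) + (1 - 1 / n)) →
      k = k₀) := by
  have hne : α - β ≠ 0 := by linarith
  constructor
  · rintro k₀ k₁ ⟨hA, _⟩ ⟨hB, _⟩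
    have h : (k₀ - k₁) * (α - β) = 0 := by linear_combination hA - hB
    rcases mul_eq_zero.mp h with h | h
    · linarith [sub_eq_zero.mp h]
    · exact absurd h hne
  · rintro k₀ k ⟨hA, hA2⟩ ⟨hB, hB2⟩
    have hle : k ≤ k₀ := by nlinarith [hB, hA]
    have hsq : β ^ 2 < α ^ 2 := by nlinarith
    have hge : k₀ ≤ k := by nlinarith [hB2, hA2]
    linarith
end

section
/- Suppose f is a real polynomial satisfying the hypotheses of the Delsarte LP bound for angle θ (f = ∑_k f_k C_k^{n/2-1} with f_0 > 0, f_k ≥ 0, f ≤ 0 on [-1, cos θ]), and t₁ < ... < t_m = 1 with weights w₁,...,w_m ≥ 0, w_m = 1, t_{m-1} = cos θ satisfy the dual conditions ∑_j w_j C_k^{n/2-1}(t_j) ≥ 0 for all k. Then f(1)/f_0 ≥ ∑_{j=1}^m w_j. -/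
/-- If `f = ∑_k f_k C_k^{n/2-1}` satisfies the hypotheses of the Delsarte LP bound for
angle `θ` (`f₀ > 0`, `f_k ≥ 0`, `f ≤ 0` on `[-1, cos θ]`), and `t₁ < ⋯ < t_m = 1` with
weights `w₁, …, w_m ≥ 0`, `w_m = 1`, `t_{m-1} = cos θ` satisfy the dual conditions
`∑ⱼ wⱼ C_k^{n/2-1}(tⱼ) ≥ 0` for all `k`, then `f(1)/f₀ ≥ ∑ⱼ wⱼ`.  (The Gegenbauer
polynomials are abstracted as `Geg`, with normalization `Geg 0 = 1`.) -/
theorem stmt7 (Geg : ℕ → ℝ → ℝ) (θ : ℝ)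
    (hGeg0 : ∀ x : ℝ, Geg 0 x = 1)
    (d : ℕ) (f : ℝ → ℝ) (c : ℕ → ℝ)
    (hexp : ∀ x : ℝ, f x = ∑ k ∈ Finset.range (d + 1), c k * Geg k x)
    (hc0 : 0 < c 0) (hc : ∀ k, 0 ≤ c k)
    (hfneg : ∀ x ∈ Set.Icc (-1 : ℝ) (Real.cos θ), f x ≤ 0)
    (m : ℕ) (hm : 2 ≤ m) (t w : Fin m → ℝ)
    (hmono : StrictMono t)
    (hrange : ∀ j, t j ∈ Set.Icc (-1 : ℝ) 1)
    (hlast : t ⟨m - 1, by omega⟩ = 1)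
    (hpenult : t ⟨m - 2, by omega⟩ = Real.cos θ)
    (hw : ∀ j, 0 ≤ w j) (hwlast : w ⟨m - 1, by omega⟩ = 1)
    (hdual : ∀ k : ℕ, 0 ≤ ∑ j, w j * Geg k (t j)) :
    ∑ j, w j ≤ f 1 / c 0 := by
  set S : ℝ := ∑ j, w j * f (t j) with hS
  have key : S = ∑ k ∈ Finset.range (d + 1), c k * ∑ j, w j * Geg k (t j) := by
    rw [hS]
    simp only [hexp, Finset.mul_sum]
    rw [Finset.sum_comm]
    refine Finset.sum_congr rfl fun k _ => ?_
    exact Finset.sum_congr rfl fun j _ => by ring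
  have h1 : c 0 * ∑ j, w j ≤ S := by
    have h0 : (∑ j, w j * Geg 0 (t j)) = ∑ j, w j := by
      simp [hGeg0]
    calc c 0 * ∑ j, w j = c 0 * ∑ j, w j * Geg 0 (t j) := by rw [h0]
      _ ≤ ∑ k ∈ Finset.range (d + 1), c k * ∑ j, w j * Geg k (t j) := by
          apply Finset.single_le_sum (f := fun k => c k * ∑ j, w j * Geg k (t j))
          · intro k _
            exact mul_nonneg (hc k) (hdual k)
          · simp
      _ = S := key.symm
  have h2 : S ≤ f 1 := by
    have hlt : ∀ j : Fin m, j ≠ ⟨m - 1, by omega⟩ → t j ≤ Real.cos θ := by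
      intro j hj
      rw [← hpenult]
      apply hmono.monotone
      have : j.1 < m - 1 := by
        rcases lt_or_eq_of_le (Nat.le_of_lt_succ (by omega : j.1 < (m-1)+1)) with h | h
        · exact h
        · exact absurd (Fin.ext h) hj
      exact Fin.mk_le_mk.mpr (by omega)
    have := Finset.sum_eq_sum_sdiff_singleton_add
      (i := (⟨m - 1, by omega⟩ : Fin m)) (Finset.mem_univ _) (fun j => w j * f (t j))
    rw [hS, this, hwlast, hlast, one_mul]
    have hle : ∑ j ∈ Finset.univ \ {(⟨m - 1, by omega⟩ : Fin m)}, w j * f (t j) ≤ 0 := by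
      apply Finset.sum_nonpos
      intro j hj
      simp only [Finset.mem_sdiff, Finset.mem_singleton] at hj
      have hne := hj.2
      have := hfneg (t j) ⟨(hrange j).1, hlt j hne⟩
      exact mul_nonpos_of_nonneg_of_nonpos (hw j) this
    linarith
  rw [le_div_iff₀ hc0]
  calc (∑ j, w j) * c 0 = c 0 * ∑ j, w j := by ring
    _ ≤ S := h1
    _ ≤ f 1 := h2
end

section
/- Let K ⊆ {0,1}^{2^{2k}} be a binary code, and define C ⊆ ℝ^{2^{2k}} to consist of the 2^{2k+1} vectors ±e_i (the standard basis vectors and their negatives) together with the vectors ((-1)^{c_1},...,(-1)^{c_{2^{2k}}})/2^k for c ∈ K. If K has minimum Hamming distance at least 2^{2k-1} - 2^{k-1} and does not contain any pair of complementary codewords, then C is a set of unit vectors with maximal inner product between distinct points at most 1/2^k, and |C| = |K| + 2^{2k+1}. -/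
open scoped RealInnerProductSpace

/-- The spherical code associated to a binary code `K ⊆ {0,1}^{2^{2k}}`: the vectors
`±eᵢ` together with the scaled sign vectors `((-1)^{c₁}, …, (-1)^{c_m})/2^k` for `c ∈ K`. -/
noncomputable def kerdockSphericalCode (k : ℕ) (K : Finset (Fin (2 ^ (2 * k)) → Bool)) :
    Set (EuclideanSpace ℝ (Fin (2 ^ (2 * k)))) :=
  (Set.range fun i => EuclideanSpace.single i (1 : ℝ)) ∪
    (Set.range fun i => -EuclideanSpace.single i (1 : ℝ)) ∪
    ((fun (c : Fin (2 ^ (2 * k)) → Bool) => (WithLp.equiv 2 (Fin (2 ^ (2 * k)) → ℝ)).symm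
      fun i => (if c i then (-1 : ℝ) else 1) / 2 ^ k) '' ↑K)

/-! The vectors `±eᵢ` have pairwise inner products `0` or `-1`, and `⟪±eᵢ, v⟫ = ±vᵢ`, which
for a sign vector `v` (all coordinates `±1/2^k`) is at most `1/2^k`. Two sign vectors of
codewords at Hamming distance `d` have inner product `(m - 2d)/m` with `m = 2^{2k}`, which is
at most `1/2^k` as soon as `d ≥ 2^{2k-1} - 2^{k-1}`. For the count, a sign vector has no
coordinate of absolute value `1` (as `k ≥ 1`), so it is none of the `±eᵢ`. -/

open Set

section SphericalCode

variable {E : Type*} [NormedAddCommGroup E] [InnerProductSpace ℝ E]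

def IsSphericalCode (S : Set E) (s : ℝ) : Prop :=
  (∀ x ∈ S, ‖x‖ = 1) ∧ S.Pairwise fun x y => ⟪x, y⟫ ≤ s

theorem IsSphericalCode.mono {S : Set E} {s t : ℝ} (h : IsSphericalCode S s) (hst : s ≤ t) :
    IsSphericalCode S t :=
  ⟨h.1, h.2.imp fun _ _ hxy => hxy.trans hst⟩

theorem IsSphericalCode.union {A B : Set E} {s : ℝ} (hA : IsSphericalCode A s)
    (hB : IsSphericalCode B s) (hAB : ∀ x ∈ A, ∀ y ∈ B, ⟪x, y⟫ ≤ s) :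
    IsSphericalCode (A ∪ B) s := by
  refine ⟨fun x hx => hx.elim (hA.1 x) (hB.1 x), pairwise_union.2 ⟨hA.2, hB.2, ?_⟩⟩
  intro x hx y hy _
  exact ⟨hAB x hx y hy, real_inner_comm x y ▸ hAB x hx y hy⟩

end SphericalCode

section CrossPolytope

variable {ι : Type*} [Fintype ι] [DecidableEq ι]

def crossPolytopeVertices (ι : Type*) [Fintype ι] [DecidableEq ι] :
    Set (EuclideanSpace ℝ ι) :=
  (range fun i => EuclideanSpace.single i (1 : ℝ)) ∪
    (range fun i => -EuclideanSpace.single i (1 : ℝ))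

theorem mem_crossPolytopeVertices {x : EuclideanSpace ℝ ι} :
    x ∈ crossPolytopeVertices ι ↔
      ∃ i, x = EuclideanSpace.single i 1 ∨ x = -EuclideanSpace.single i 1 := by
  simp only [crossPolytopeVertices, mem_union, mem_range]
  grind

theorem isSphericalCode_crossPolytopeVertices :
    IsSphericalCode (crossPolytopeVertices ι) 0 := by
  refine ⟨fun x hx => ?_, fun x hx y hy hxy => ?_⟩
  · obtain ⟨i, rfl | rfl⟩ := mem_crossPolytopeVertices.1 hx <;> simp
  · obtain ⟨i, rfl | rfl⟩ := mem_crossPolytopeVertices.1 hx <;>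
      obtain ⟨j, rfl | rfl⟩ := mem_crossPolytopeVertices.1 hy <;>
      by_cases hij : i = j <;> simp_all [EuclideanSpace.inner_single_left]

theorem inner_le_of_mem_crossPolytopeVertices {x y : EuclideanSpace ℝ ι} {b : ℝ}
    (hx : x ∈ crossPolytopeVertices ι) (hy : ∀ i, |y i| ≤ b) : ⟪x, y⟫ ≤ b := by
  obtain ⟨i, rfl | rfl⟩ := mem_crossPolytopeVertices.1 hx
  · simpa [EuclideanSpace.inner_single_left] using (le_abs_self _).trans (hy i)
  · simpa [EuclideanSpace.inner_single_left] using (neg_le_abs _).trans (hy i)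

theorem IsSphericalCode.crossPolytopeVertices_union {B : Set (EuclideanSpace ℝ ι)} {s : ℝ}
    (hB : IsSphericalCode B s) (hs : 0 ≤ s) (hcoord : ∀ y ∈ B, ∀ i, |y i| ≤ s) :
    IsSphericalCode (crossPolytopeVertices ι ∪ B) s :=
  (isSphericalCode_crossPolytopeVertices.mono hs).union hB fun _ hx y hy =>
    inner_le_of_mem_crossPolytopeVertices hx (hcoord y hy)

theorem exists_abs_apply_eq_one_of_mem_crossPolytopeVertices {x : EuclideanSpace ℝ ι}
    (hx : x ∈ crossPolytopeVertices ι) : ∃ i, |x i| = 1 := by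
  obtain ⟨i, rfl | rfl⟩ := mem_crossPolytopeVertices.1 hx <;> exact ⟨i, by simp⟩

theorem finite_crossPolytopeVertices : (crossPolytopeVertices ι).Finite :=
  (finite_range _).union (finite_range _)

theorem ncard_crossPolytopeVertices :
    (crossPolytopeVertices ι).ncard = 2 * Fintype.card ι := by
  have hinj : Function.Injective fun i : ι => EuclideanSpace.single i (1 : ℝ) :=
    (EuclideanSpace.orthonormal_single (𝕜 := ℝ) (ι := ι)).linearIndependent.injective
  have hdisj : Disjoint (range fun i : ι => EuclideanSpace.single i (1 : ℝ))
      (range fun i : ι => -EuclideanSpace.single i (1 : ℝ)) := by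
    refine disjoint_left.2 ?_
    rintro _ ⟨i, rfl⟩ ⟨j, hji⟩
    have := congrArg (fun x : EuclideanSpace ℝ ι => x i) hji
    simp only [PiLp.neg_apply, PiLp.single_apply] at this
    split_ifs at this <;> norm_num at this
  rw [crossPolytopeVertices, ncard_union_eq hdisj, ncard_range_of_injective hinj,
    ncard_range_of_injective (f := fun i : ι => -EuclideanSpace.single i (1 : ℝ))
      (neg_injective.comp hinj), Nat.card_eq_fintype_card, two_mul]

end CrossPolytope

section SignVector

variable {ι : Type*}

noncomputable def scaledSignVector (r : ℝ) (c : ι → Bool) : EuclideanSpace ℝ ι :=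
  (WithLp.equiv 2 (ι → ℝ)).symm fun i => (if c i then (-1 : ℝ) else 1) / r

theorem scaledSignVector_apply (r : ℝ) (c : ι → Bool) (i : ι) :
    scaledSignVector r c i = (if c i then (-1 : ℝ) else 1) / r := rfl

theorem abs_scaledSignVector_apply (r : ℝ) (c : ι → Bool) (i : ι) :
    |scaledSignVector r c i| = |r|⁻¹ := by
  rw [scaledSignVector_apply]
  cases c i <;> simp [abs_div]

theorem scaledSignVector_injective {r : ℝ} (hr : r ≠ 0) :
    Function.Injective (scaledSignVector (ι := ι) r) := by
  intro c c' h
  funext i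
  have := congrArg (fun x : EuclideanSpace ℝ ι => x i) h
  simp only [scaledSignVector_apply, div_left_inj' hr] at this
  revert this
  cases c i <;> cases c' i <;> norm_num

variable [Fintype ι]

theorem inner_scaledSignVector (r : ℝ) (c c' : ι → Bool) :
    ⟪scaledSignVector r c, scaledSignVector r c'⟫
      = (Fintype.card ι - 2 * hammingDist c c') / r ^ 2 := by
  have hterm : ∀ i, ⟪scaledSignVector r c i, scaledSignVector r c' i⟫
      = (1 - 2 * if c i ≠ c' i then 1 else 0) / r ^ 2 := by
    intro i
    rw [scaledSignVector_apply, scaledSignVector_apply]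
    cases c i <;> cases c' i <;> simp <;> ring
  rw [PiLp.inner_apply, Finset.sum_congr rfl fun i _ => hterm i, ← Finset.sum_div,
    Finset.sum_sub_distrib, ← Finset.mul_sum, Finset.sum_boole]
  simp [hammingDist]

theorem norm_scaledSignVector {r : ℝ} (hr : r ^ 2 = Fintype.card ι) (hr0 : r ≠ 0)
    (c : ι → Bool) : ‖scaledSignVector r c‖ = 1 := by
  have h := inner_scaledSignVector r c c
  rw [hammingDist_self, real_inner_self_eq_norm_sq, ← hr] at h
  simp only [CharP.cast_eq_zero, mul_zero, sub_zero, div_self (pow_ne_zero 2 hr0)] at h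
  exact (pow_eq_one_iff_of_nonneg (norm_nonneg _) two_ne_zero).1 h

theorem isSphericalCode_image_scaledSignVector {K : Set (ι → Bool)} {r s : ℝ}
    (hr : r ^ 2 = Fintype.card ι) (hr0 : r ≠ 0)
    (hK : K.Pairwise fun c c' => (Fintype.card ι - 2 * hammingDist c c' : ℝ) ≤ s * r ^ 2) :
    IsSphericalCode (scaledSignVector r '' K) s := by
  refine ⟨?_, ?_⟩
  · rintro _ ⟨c, -, rfl⟩
    exact norm_scaledSignVector hr hr0 c
  · rintro _ ⟨c, hc, rfl⟩ _ ⟨c', hc', rfl⟩ hne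
    rw [inner_scaledSignVector, div_le_iff₀ (by positivity)]
    exact hK hc hc' fun h => hne (h ▸ rfl)

theorem ncard_crossPolytopeVertices_union_image_scaledSignVector [DecidableEq ι] {r : ℝ}
    (hr0 : r ≠ 0) (hr1 : |r| ≠ 1) (K : Finset (ι → Bool)) :
    (crossPolytopeVertices ι ∪ scaledSignVector r '' (K : Set (ι → Bool))).ncard
      = 2 * Fintype.card ι + K.card := by
  have hdisj :
      Disjoint (crossPolytopeVertices ι) (scaledSignVector r '' (K : Set (ι → Bool))) := by
    refine disjoint_left.2 ?_
    rintro _ hx ⟨c, -, rfl⟩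
    obtain ⟨i, hi⟩ := exists_abs_apply_eq_one_of_mem_crossPolytopeVertices hx
    rw [abs_scaledSignVector_apply] at hi
    exact hr1 (inv_eq_one.1 hi)
  rw [ncard_union_eq hdisj finite_crossPolytopeVertices, ncard_crossPolytopeVertices,
    ncard_image_of_injective _ (scaledSignVector_injective hr0), ncard_coe_finset]

end SignVector

theorem two_pow_two_mul_le_two_mul_add_two_pow {k d : ℕ}
    (h : 2 ^ (2 * k - 1) - 2 ^ (k - 1) ≤ d) : 2 ^ (2 * k) ≤ 2 * d + 2 ^ k := by
  rcases k with _ | k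
  · simp
  · rw [show 2 * (k + 1) - 1 = 2 * k + 1 by omega, Nat.add_sub_cancel] at h
    rw [show 2 * (k + 1) = 2 * k + 1 + 1 by omega, pow_succ, pow_succ]
    omega

theorem isSphericalCode_image_scaledSignVector_two_pow (k : ℕ)
    {K : Set (Fin (2 ^ (2 * k)) → Bool)}
    (hK : K.Pairwise fun c c' => 2 ^ (2 * k - 1) - 2 ^ (k - 1) ≤ hammingDist c c') :
    IsSphericalCode (scaledSignVector (2 ^ k) '' K) (1 / 2 ^ k) := by
  have hr0 : (2 : ℝ) ^ k ≠ 0 := by positivity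
  have hsq : ((2 : ℝ) ^ k) ^ 2 = Fintype.card (Fin (2 ^ (2 * k))) := by
    rw [Fintype.card_fin, Nat.cast_pow, ← pow_mul, mul_comm]
    norm_num
  refine isSphericalCode_image_scaledSignVector hsq hr0 fun c hc c' hc' hne => ?_
  have hd : (2 : ℝ) ^ (2 * k) ≤ 2 * hammingDist c c' + 2 ^ k := by
    exact_mod_cast two_pow_two_mul_le_two_mul_add_two_pow (hK hc hc' hne)
  rw [← hsq, one_div, sq, inv_mul_cancel_left₀ hr0, ← sq, ← pow_mul, mul_comm k]
  linarith

theorem kerdockSphericalCode_eq (k : ℕ) (K : Finset (Fin (2 ^ (2 * k)) → Bool)) :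
    kerdockSphericalCode k K =
      crossPolytopeVertices _ ∪
        scaledSignVector (2 ^ k) '' (K : Set (Fin (2 ^ (2 * k)) → Bool)) :=
  rfl

theorem stmt9_general (k : ℕ) (hk : 1 ≤ k) (K : Finset (Fin (2 ^ (2 * k)) → Bool))
    (hmin : ∀ c ∈ K, ∀ c' ∈ K, c ≠ c' →
      2 ^ (2 * k - 1) - 2 ^ (k - 1) ≤ hammingDist c c') :
    (∀ x ∈ kerdockSphericalCode k K, ‖x‖ = 1) ∧
    (∀ x ∈ kerdockSphericalCode k K, ∀ y ∈ kerdockSphericalCode k K, x ≠ y →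
      ⟪x, y⟫ ≤ 1 / 2 ^ k) ∧
    (kerdockSphericalCode k K).ncard = K.card + 2 ^ (2 * k + 1) := by
  have habs : |(2 : ℝ) ^ k| = 2 ^ k := abs_of_pos (by positivity)
  have hcode : IsSphericalCode (kerdockSphericalCode k K) (1 / 2 ^ k) := by
    refine (isSphericalCode_image_scaledSignVector_two_pow k fun c hc c' hc' =>
      hmin c hc c' hc').crossPolytopeVertices_union (by positivity) ?_
    rintro _ ⟨c, -, rfl⟩ i
    rw [abs_scaledSignVector_apply, habs, one_div]
  have hr1 : |(2 : ℝ) ^ k| ≠ 1 := by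
    rw [habs]
    exact (one_lt_pow₀ one_lt_two (by omega)).ne'
  refine ⟨hcode.1, hcode.2, ?_⟩
  rw [kerdockSphericalCode_eq, ncard_crossPolytopeVertices_union_image_scaledSignVector
    (by positivity) hr1, Fintype.card_fin, pow_succ]
  ring

/-- If `K ⊆ {0,1}^{2^{2k}}` has all Hamming distances between distinct codewords in
`[2^{2k-1} - 2^{k-1}, 2^{2k-1} + 2^{k-1}]` and contains no pair of complementary
codewords, then the associated spherical code consists of unit vectors with maximal
inner product between distinct points at most `1/2^k`, and has exactly
`|K| + 2^{2k+1}` elements. -/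
theorem stmt9 (k : ℕ) (hk : 1 ≤ k) (K : Finset (Fin (2 ^ (2 * k)) → Bool))
    (hmin : ∀ c ∈ K, ∀ c' ∈ K, c ≠ c' →
      2 ^ (2 * k - 1) - 2 ^ (k - 1) ≤ hammingDist c c')
    (hmaxd : ∀ c ∈ K, ∀ c' ∈ K, c ≠ c' →
      hammingDist c c' ≤ 2 ^ (2 * k - 1) + 2 ^ (k - 1))
    (hcompl : ∀ c ∈ K, ∀ c' ∈ K, ¬∀ i, c' i = !c i) :
    (∀ x ∈ kerdockSphericalCode k K, ‖x‖ = 1) ∧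
    (∀ x ∈ kerdockSphericalCode k K, ∀ y ∈ kerdockSphericalCode k K, x ≠ y →
      ⟪x, y⟫ ≤ 1 / 2 ^ k) ∧
    (kerdockSphericalCode k K).ncard = K.card + 2 ^ (2 * k + 1) :=
  stmt9_general k hk K hmin
end

section
/- With the hypotheses of the three-point bound (F symmetric, ∑_{x,y,z∈C} F(⟨x,z⟩,⟨y,z⟩,⟨x,y⟩) ≥ 0, 3F(u,u,1) ≤ -1 on [-1, cos θ], F ≤ 0 on the admissible triple region), if |C| = 1 + F(1,1,1), then for all distinct x, y ∈ C we have 3F(⟨x,y⟩, ⟨x,y⟩, 1) = -1. -/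
open scoped RealInnerProductSpace

section aux
variable {E : Type*} [NormedAddCommGroup E] [InnerProductSpace ℝ E]

private lemma key_ineq (a b c : E) (ha : ‖a‖ = 1) (hb : ‖b‖ = 1) (hc : ‖c‖ = 1) :
    0 ≤ (1 - ⟪a,b⟫ ^ 2) *
      (1 + 2 * ⟪a,c⟫ * ⟪b,c⟫ * ⟪a,b⟫ - ⟪a,c⟫ ^ 2 - ⟪b,c⟫ ^ 2 - ⟪a,b⟫ ^ 2) := by
  have haa : ⟪a,a⟫ = 1 := by rw [real_inner_self_eq_norm_sq, ha]; norm_num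
  have hbb : ⟪b,b⟫ = 1 := by rw [real_inner_self_eq_norm_sq, hb]; norm_num
  have hcc : ⟪c,c⟫ = 1 := by rw [real_inner_self_eq_norm_sq, hc]; norm_num
  have hba : ⟪b,a⟫ = ⟪a,b⟫ := real_inner_comm _ _
  have hca : ⟪c,a⟫ = ⟪a,c⟫ := real_inner_comm _ _
  have hcb : ⟪c,b⟫ = ⟪b,c⟫ := real_inner_comm _ _
  set w : E := (1 - ⟪a,b⟫ ^ 2) • c - (⟪a,c⟫ - ⟪a,b⟫ * ⟪b,c⟫) • a
      - (⟪b,c⟫ - ⟪a,b⟫ * ⟪a,c⟫) • b with hw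
  have h0 : 0 ≤ ⟪w, w⟫ := real_inner_self_nonneg
  have hexp : ⟪w, w⟫ = (1 - ⟪a,b⟫ ^ 2) *
      (1 + 2 * ⟪a,c⟫ * ⟪b,c⟫ * ⟪a,b⟫ - ⟪a,c⟫ ^ 2 - ⟪b,c⟫ ^ 2 - ⟪a,b⟫ ^ 2) := by
    simp only [hw, inner_sub_left, inner_sub_right, real_inner_smul_left,
      real_inner_smul_right, haa, hbb, hcc, hba, hca, hcb]
    ring
  linarith

private lemma neg_one_of_sq_one {a b : E} (ha : ‖a‖ = 1) (hb : ‖b‖ = 1)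
    (hne : a ≠ b) (h : ⟪a,b⟫ ^ 2 = 1) : b = -a := by
  have hfac : (⟪a,b⟫ - 1) * (⟪a,b⟫ + 1) = 0 := by nlinarith
  rcases mul_eq_zero.mp hfac with h1 | h1
  · have h1 : ⟪a,b⟫ = 1 := by linarith
    exact absurd ((inner_eq_one_iff_of_norm_eq_one ha hb).mp h1) hne
  · have h1 : ⟪a,b⟫ = -1 := by linarith
    have : ⟪a, -b⟫ = 1 := by rw [inner_neg_right, h1]; norm_num
    have h2 := (inner_eq_one_iff_of_norm_eq_one ha (by simpa using hb)).mp this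
    exact (neg_eq_iff_eq_neg.mpr h2).symm

private lemma gram_nonneg (a b c : E) (ha : ‖a‖ = 1) (hb : ‖b‖ = 1) (hc : ‖c‖ = 1)
    (hab : a ≠ b) (hac : a ≠ c) (hbc : b ≠ c) :
    0 ≤ 1 + 2 * ⟪a,c⟫ * ⟪b,c⟫ * ⟪a,b⟫ - ⟪a,c⟫ ^ 2 - ⟪b,c⟫ ^ 2 - ⟪a,b⟫ ^ 2 := by
  have habs : |⟪a,b⟫| ≤ 1 := by
    have := abs_real_inner_le_norm a b; rwa [ha, hb, one_mul] at this
  have hsq : ⟪a,b⟫ ^ 2 ≤ 1 := by nlinarith [abs_nonneg ⟪a,b⟫, sq_abs ⟪a,b⟫]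
  rcases lt_or_eq_of_le hsq with hlt | heq1
  · nlinarith [key_ineq a b c ha hb hc]
  · -- b = -a, use permuted inequality with pair (a,c)
    have hbna : b = -a := neg_one_of_sq_one ha hb hab heq1
    have habs2 : |⟪a,c⟫| ≤ 1 := by
      have := abs_real_inner_le_norm a c; rwa [ha, hc, one_mul] at this
    have hsq2 : ⟪a,c⟫ ^ 2 ≤ 1 := by nlinarith [abs_nonneg ⟪a,c⟫, sq_abs ⟪a,c⟫]
    have hlt2 : ⟪a,c⟫ ^ 2 < 1 := by
      rcases lt_or_eq_of_le hsq2 with h | h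
      · exact h
      · exact absurd (neg_one_of_sq_one ha hc hac h) (by rw [← hbna]; exact Ne.symm hbc)
    have key := key_ineq a c b ha hc hb
    have hcb : ⟪c,b⟫ = ⟪b,c⟫ := real_inner_comm _ _
    rw [hcb] at key
    nlinarith [key]

end aux

/-- Complementary slackness for the three-point bound: with the hypotheses of the
three-point bound, if `|C| = 1 + F(1,1,1)`, then `3F(⟨x,y⟩, ⟨x,y⟩, 1) = -1` for all
distinct `x, y ∈ C`. -/
theorem stmt11 {n : ℕ} (θ : ℝ) (F : ℝ → ℝ → ℝ → ℝ)
    (hsym : ∀ u v t : ℝ, F u v t = F v u t ∧ F u v t = F u t v)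
    (C : Finset (EuclideanSpace ℝ (Fin n)))
    (hunit : ∀ x ∈ C, ‖x‖ = 1)
    (ha : 0 ≤ ∑ x ∈ C, ∑ y ∈ C, ∑ z ∈ C, F ⟪x, z⟫ ⟪y, z⟫ ⟪x, y⟫)
    (hb : ∀ u ∈ Set.Icc (-1 : ℝ) (Real.cos θ), 3 * F u u 1 ≤ -1)
    (hc : ∀ u v t : ℝ, -1 ≤ u → u ≤ Real.cos θ → -1 ≤ v → v ≤ Real.cos θ →
      -1 ≤ t → t ≤ Real.cos θ →
      0 ≤ 1 + 2 * u * v * t - u ^ 2 - v ^ 2 - t ^ 2 → F u v t ≤ 0)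
    (hcode : ∀ x ∈ C, ∀ y ∈ C, x ≠ y → ⟪x, y⟫ ≤ Real.cos θ)
    (heq : (C.card : ℝ) = 1 + F 1 1 1) :
    ∀ x ∈ C, ∀ y ∈ C, x ≠ y → 3 * F ⟪x, y⟫ ⟪x, y⟫ 1 = -1 := by
  classical
  have hself : ∀ x ∈ C, ⟪x, x⟫ = (1:ℝ) := fun x hx => by
    rw [real_inner_self_eq_norm_sq, hunit x hx]; norm_num
  have hlow : ∀ x ∈ C, ∀ y ∈ C, (-1:ℝ) ≤ ⟪x, y⟫ := fun x hx y hy => by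
    have := abs_real_inner_le_norm x y
    rw [hunit x hx, hunit y hy, one_mul] at this
    linarith [(abs_le.mp this).1]
  -- g-symmetry helpers
  have hgsym : ∀ u : ℝ, F 1 u u = F u u 1 := fun u => by
    rw [(hsym 1 u u).1, (hsym u 1 u).2]
  have hgsym2 : ∀ u : ℝ, F u 1 u = F u u 1 := fun u => (hsym u 1 u).2
  -- distinct triples give nonpositive terms
  have hgram : ∀ x ∈ C, ∀ y ∈ C, ∀ z ∈ C, x ≠ y → x ≠ z → y ≠ z →
      F ⟪x, z⟫ ⟪y, z⟫ ⟪x, y⟫ ≤ 0 := by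
    intro x hx y hy z hz hxy hxz hyz
    exact hc _ _ _ (hlow x hx z hz) (hcode x hx z hz hxz) (hlow y hy z hz)
      (hcode y hy z hz hyz) (hlow x hx y hy) (hcode x hx y hy hxy)
      (gram_nonneg x y z (hunit x hx) (hunit y hy) (hunit z hz) hxy hxz hyz)
  -- Step A: inner sum bound for distinct x, y
  have hstepA : ∀ x ∈ C, ∀ y ∈ C.erase x,
      ∑ z ∈ C, F ⟪x, z⟫ ⟪y, z⟫ ⟪x, y⟫ ≤ 2 * F ⟪x, y⟫ ⟪x, y⟫ 1 := by
    intro x hx y hy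
    have hyC : y ∈ C := Finset.mem_of_mem_erase hy
    have hyx : y ≠ x := Finset.ne_of_mem_erase hy
    have h1 : ∑ z ∈ C, F ⟪x, z⟫ ⟪y, z⟫ ⟪x, y⟫
        = F ⟪x, x⟫ ⟪y, x⟫ ⟪x, y⟫ + ∑ z ∈ C.erase x, F ⟪x, z⟫ ⟪y, z⟫ ⟪x, y⟫ :=
      (Finset.add_sum_erase C _ hx).symm
    have h2 : ∑ z ∈ C.erase x, F ⟪x, z⟫ ⟪y, z⟫ ⟪x, y⟫
        = F ⟪x, y⟫ ⟪y, y⟫ ⟪x, y⟫ + ∑ z ∈ (C.erase x).erase y, F ⟪x, z⟫ ⟪y, z⟫ ⟪x, y⟫ :=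
      (Finset.add_sum_erase _ _ hy).symm
    have h3 : ∑ z ∈ (C.erase x).erase y, F ⟪x, z⟫ ⟪y, z⟫ ⟪x, y⟫ ≤ 0 := by
      apply Finset.sum_nonpos
      intro z hz
      have hzy : z ≠ y := Finset.ne_of_mem_erase hz
      have hz' : z ∈ C.erase x := Finset.mem_of_mem_erase hz
      have hzx : z ≠ x := Finset.ne_of_mem_erase hz'
      exact hgram x hx y hyC z (Finset.mem_of_mem_erase hz') hyx.symm hzx.symm hzy.symm
    have e1 : F ⟪x, x⟫ ⟪y, x⟫ ⟪x, y⟫ = F ⟪x, y⟫ ⟪x, y⟫ 1 := by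
      rw [hself x hx, real_inner_comm y x, hgsym]
    have e2 : F ⟪x, y⟫ ⟪y, y⟫ ⟪x, y⟫ = F ⟪x, y⟫ ⟪x, y⟫ 1 := by
      rw [hself y hyC, hgsym2]
    rw [h1, h2, e1, e2]; linarith
  -- Step B: double sum bound
  have hstepB : ∀ x ∈ C, ∑ y ∈ C, ∑ z ∈ C, F ⟪x, z⟫ ⟪y, z⟫ ⟪x, y⟫
      ≤ F 1 1 1 + 3 * ∑ y ∈ C.erase x, F ⟪x, y⟫ ⟪x, y⟫ 1 := by
    intro x hx
    have h1 : ∑ y ∈ C, ∑ z ∈ C, F ⟪x, z⟫ ⟪y, z⟫ ⟪x, y⟫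
        = (∑ z ∈ C, F ⟪x, z⟫ ⟪x, z⟫ ⟪x, x⟫)
          + ∑ y ∈ C.erase x, ∑ z ∈ C, F ⟪x, z⟫ ⟪y, z⟫ ⟪x, y⟫ :=
      (Finset.add_sum_erase C _ hx).symm
    have h2 : ∑ z ∈ C, F ⟪x, z⟫ ⟪x, z⟫ ⟪x, x⟫
        = F 1 1 1 + ∑ z ∈ C.erase x, F ⟪x, z⟫ ⟪x, z⟫ 1 := by
      rw [hself x hx]
      rw [← Finset.add_sum_erase C (fun z => F ⟪x, z⟫ ⟪x, z⟫ 1) hx, hself x hx]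
    have h3 : ∑ y ∈ C.erase x, ∑ z ∈ C, F ⟪x, z⟫ ⟪y, z⟫ ⟪x, y⟫
        ≤ ∑ y ∈ C.erase x, 2 * F ⟪x, y⟫ ⟪x, y⟫ 1 :=
      Finset.sum_le_sum (fun y hy => hstepA x hx y hy)
    rw [h1, h2, Finset.mul_sum]
    calc F 1 1 1 + ∑ z ∈ C.erase x, F ⟪x, z⟫ ⟪x, z⟫ 1
          + ∑ y ∈ C.erase x, ∑ z ∈ C, F ⟪x, z⟫ ⟪y, z⟫ ⟪x, y⟫
        ≤ F 1 1 1 + ∑ z ∈ C.erase x, F ⟪x, z⟫ ⟪x, z⟫ 1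
          + ∑ y ∈ C.erase x, 2 * F ⟪x, y⟫ ⟪x, y⟫ 1 := by linarith
      _ = F 1 1 1 + ∑ y ∈ C.erase x, 3 * F ⟪x, y⟫ ⟪x, y⟫ 1 := by
          rw [add_assoc, ← Finset.sum_add_distrib]
          congr 1
          exact Finset.sum_congr rfl (fun y _ => by ring)
  -- each slack term is nonpositive
  have hterm : ∀ x ∈ C, ∀ y ∈ C.erase x, 3 * F ⟪x, y⟫ ⟪x, y⟫ 1 + 1 ≤ 0 := by
    intro x hx y hy
    have hyC : y ∈ C := Finset.mem_of_mem_erase hy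
    have hyx : y ≠ x := Finset.ne_of_mem_erase hy
    have := hb ⟪x, y⟫ ⟨hlow x hx y hyC, hcode x hx y hyC hyx.symm⟩
    linarith
  intro x hx y hy hxy
  have hyE : y ∈ C.erase x := Finset.mem_erase_of_ne_of_mem (Ne.symm hxy) hy
  set h : EuclideanSpace ℝ (Fin n) → ℝ :=
    fun x => ∑ y ∈ C.erase x, (3 * F ⟪x, y⟫ ⟪x, y⟫ 1 + 1) with hh
  have hF111 : F 1 1 1 = (C.card : ℝ) - 1 := by linarith
  have hcardE : ∀ x ∈ C, (((C.erase x).card : ℕ) : ℝ) = (C.card : ℝ) - 1 := by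
    intro x hx
    rw [Finset.card_erase_of_mem hx]
    have h1 : 1 ≤ C.card := Finset.card_pos.mpr ⟨x, hx⟩
    rw [Nat.cast_sub h1, Nat.cast_one]
  have hxeq : ∀ x ∈ C,
      F 1 1 1 + 3 * ∑ y ∈ C.erase x, F ⟪x, y⟫ ⟪x, y⟫ 1 = h x := by
    intro x hx
    rw [hh]
    simp only [Finset.sum_add_distrib, Finset.sum_const, nsmul_eq_mul, mul_one,
      hcardE x hx, hF111, Finset.mul_sum]
    ring
  have hnonneg : 0 ≤ ∑ x ∈ C, h x :=
    le_trans ha (le_trans (Finset.sum_le_sum hstepB)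
      (le_of_eq (Finset.sum_congr rfl hxeq)))
  have hnonpos : ∀ x ∈ C, h x ≤ 0 := fun x hx => Finset.sum_nonpos (hterm x hx)
  have hzero : ∑ x ∈ C, h x = 0 := le_antisymm (Finset.sum_nonpos hnonpos) hnonneg
  have hx0 : h x = 0 := (Finset.sum_eq_zero_iff_of_nonpos hnonpos).mp hzero x hx
  have hfin := (Finset.sum_eq_zero_iff_of_nonpos (hterm x hx)).mp hx0 y hyE
  linarith
end
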